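/- Let q ∈ (0,1) and s ∈ [0,1]. Then Σ_{k=0}^∞ ζ_{q,s}(k) = Σ_{k=0}^∞ (1−q²)·q^k·√s / √(1 − s·q^{2(k+1)}) ≥ −((1−q²)/(q·ln q)) · arcsin(√s·q). -/

import Mathlib

/-- The function `ζ_{q,s}(x) := (1−q²)·q^x·√s / √(1 − s·q^{2(x+1)})`
(with `q ^ x` the real power). -/
noncomputable def zeta (q s x : ℝ) : ℝ :=
  (1 - q ^ 2) * q ^ x * Real.sqrt s / Real.sqrt (1 - s * q ^ (2 * (x + 1)))

/-!
On `(-1, ∞)` the function `ζ_{q,s}` is decreasing and is the derivative of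
`F x = (1 - q²) / (q log q) · arcsin (√s q^(x+1))`, because `u x = √s q^(x+1)` satisfies
`u' = u log q` and `u² = s q^(2(x+1))`. Since `ζ_{q,s}` is decreasing, each partial sum dominates
the integral `F n - F 0`, and `F n → 0` as `q^(n+1) → 0`, so the series is at least `-F 0`.
-/

open Real Filter Topology Set

theorem AntitoneOn.sub_le_tsum_of_hasDerivAt {f F : ℝ → ℝ} {L : ℝ}
    (hf : AntitoneOn f (Ici 0)) (hsum : Summable fun n : ℕ => f n)
    (hF : ∀ x, 0 ≤ x → HasDerivAt F (f x) x)
    (hlim : Tendsto (fun n : ℕ => F n) atTop (𝓝 L)) :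
    L - F 0 ≤ ∑' n : ℕ, f n := by
  have hpartial : ∀ n : ℕ, F n - F 0 ≤ ∑ i ∈ Finset.range n, f i := fun n => by
    have hmono : AntitoneOn f (Icc 0 (n : ℝ)) := hf.mono Icc_subset_Ici_self
    have hftc : ∫ x in (0 : ℝ)..n, f x = F n - F 0 := by
      rw [← uIcc_of_le n.cast_nonneg] at hmono
      exact intervalIntegral.integral_eq_sub_of_hasDerivAt
        (fun x hx => hF x (by rw [uIcc_of_le n.cast_nonneg] at hx; exact hx.1))
        hmono.intervalIntegrable
    have hcompare := AntitoneOn.integral_le_sum_Ico n.zero_le (by simpa using hmono)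
    simpa [hftc, ← Finset.range_eq_Ico] using hcompare
  exact le_of_tendsto_of_tendsto' (hlim.sub_const _) hsum.hasSum.tendsto_sum_nat hpartial

section zeta

variable {q s x : ℝ}

theorem sqrt_mul_rpow_lt_one (hq0 : 0 < q) (hq1 : q < 1) (hs1 : s ≤ 1) (hx : -1 < x) :
    √s * q ^ (x + 1) < 1 :=
  mul_lt_one_of_nonneg_of_lt_one_right (sqrt_le_one.mpr hs1) (rpow_nonneg hq0.le _)
    (rpow_lt_one hq0.le hq1 (by linarith))

theorem sq_sqrt_mul_rpow (hq0 : 0 < q) (hs0 : 0 ≤ s) (x : ℝ) :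
    (√s * q ^ (x + 1)) ^ 2 = s * q ^ (2 * (x + 1)) := by
  rw [mul_pow, sq_sqrt hs0, ← rpow_natCast, ← rpow_mul hq0.le, mul_comm (x + 1)]
  norm_num

theorem one_sub_mul_rpow_pos (hq0 : 0 < q) (hq1 : q < 1) (hs0 : 0 ≤ s) (hs1 : s ≤ 1)
    (hx : -1 < x) : 0 < 1 - s * q ^ (2 * (x + 1)) := by
  have hlt := sqrt_mul_rpow_lt_one hq0 hq1 hs1 hx
  have hnonneg : 0 ≤ √s * q ^ (x + 1) := by positivity
  rw [← sq_sqrt_mul_rpow hq0 hs0]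
  nlinarith

theorem zeta_nonneg (hq0 : 0 ≤ q) (hq1 : q ≤ 1) (s x : ℝ) : 0 ≤ zeta q s x := by
  have : 0 ≤ 1 - q ^ 2 := by nlinarith
  unfold zeta
  positivity

theorem antitoneOn_zeta (hq0 : 0 < q) (hq1 : q < 1) (hs0 : 0 ≤ s) (hs1 : s ≤ 1) :
    AntitoneOn (zeta q s) (Ioi (-1)) := by
  intro x hx y _ hxy
  have hnum : 0 ≤ 1 - q ^ 2 := by nlinarith
  have hpow (a b : ℝ) (hab : a ≤ b) : q ^ b ≤ q ^ a :=
    rpow_le_rpow_of_exponent_ge hq0 hq1.le hab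
  apply div_le_div₀ (by positivity)
  · gcongr (1 - q ^ 2) * ?_ * √s
    exact hpow x y hxy
  · exact sqrt_pos.mpr (one_sub_mul_rpow_pos hq0 hq1 hs0 hs1 hx)
  · gcongr √(1 - s * ?_)
    exact hpow _ _ (by linarith)

theorem zeta_le_geometric (hq0 : 0 < q) (hq1 : q < 1) (hs1 : s ≤ 1) (hx : 0 ≤ x) :
    zeta q s x ≤ (1 - q ^ 2) * √s / √(1 - q ^ 2) * q ^ x := by
  have hnum : 0 < 1 - q ^ 2 := by nlinarith
  have hden : s * q ^ (2 * (x + 1)) ≤ q ^ 2 := calc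
    s * q ^ (2 * (x + 1)) ≤ 1 * q ^ (2 : ℝ) := by
      gcongr ?_ * ?_
      exact rpow_le_rpow_of_exponent_ge hq0 hq1.le (by linarith)
    _ = q ^ 2 := by norm_num
  calc zeta q s x ≤ (1 - q ^ 2) * q ^ x * √s / √(1 - q ^ 2) := by
        unfold zeta
        gcongr
    _ = (1 - q ^ 2) * √s / √(1 - q ^ 2) * q ^ x := by ring

theorem summable_zeta (hq0 : 0 < q) (hq1 : q < 1) (hs1 : s ≤ 1) :
    Summable fun k : ℕ => zeta q s k := by
  refine .of_nonneg_of_le (fun k => zeta_nonneg hq0.le hq1.le s k)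
    (fun k => (zeta_le_geometric hq0 hq1 hs1 k.cast_nonneg).trans_eq ?_)
    ((summable_geometric_of_lt_one hq0.le hq1).mul_left ((1 - q ^ 2) * √s / √(1 - q ^ 2)))
  rw [rpow_natCast]

theorem hasDerivAt_arcsin_sqrt_mul_rpow (hq0 : 0 < q) (hq1 : q < 1) (hs0 : 0 ≤ s)
    (hs1 : s ≤ 1) (hx : -1 < x) :
    HasDerivAt (fun x => (1 - q ^ 2) / (q * log q) * arcsin (√s * q ^ (x + 1)))
      (zeta q s x) x := by
  have hu : HasDerivAt (fun x => √s * q ^ (x + 1)) (√s * (log q * 1 * q ^ (x + 1))) x :=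
    (((hasDerivAt_id x).add_const 1).const_rpow hq0).const_mul _
  have hlt := sqrt_mul_rpow_lt_one hq0 hq1 hs1 hx
  have hnonneg : 0 ≤ √s * q ^ (x + 1) := by positivity
  refine (((hasDerivAt_arcsin (by linarith) hlt.ne).comp x hu).const_mul _).congr_deriv ?_
  have hden := sqrt_pos.mpr (one_sub_mul_rpow_pos hq0 hq1 hs0 hs1 hx)
  have hlog : log q ≠ 0 := (log_neg hq0 hq1).ne
  rw [sq_sqrt_mul_rpow hq0 hs0, rpow_add hq0, rpow_one]
  unfold zeta
  field_simp

theorem tendsto_arcsin_sqrt_mul_rpow_natCast (hq0 : 0 < q) (hq1 : q < 1) :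
    Tendsto (fun n : ℕ => arcsin (√s * q ^ ((n : ℝ) + 1))) atTop (𝓝 0) := by
  have hpow : Tendsto (fun n : ℕ => q ^ ((n : ℝ) + 1)) atTop (𝓝 0) :=
    (tendsto_rpow_atTop_of_base_lt_one q (by linarith) hq1).comp
      (tendsto_atTop_add_const_right _ 1 tendsto_natCast_atTop_atTop)
  have hu := hpow.const_mul √s
  rw [mul_zero] at hu
  simpa [Function.comp_def] using (continuous_arcsin.tendsto 0).comp hu

end zeta

/-- For `q ∈ (0,1)` and `s ∈ [0,1]`, the sum of the (summable) series `Σ_{k=0}^∞ ζ_{q,s}(k)`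
is at least `−((1−q²)/(q·ln q)) · arcsin(√s·q)`. -/
theorem stmt7 (q s : ℝ) (hq : q ∈ Set.Ioo (0 : ℝ) 1) (hs : s ∈ Set.Icc (0 : ℝ) 1) :
    Summable (fun k : ℕ => zeta q s k) ∧
    ∑' k : ℕ, zeta q s k ≥ -((1 - q ^ 2) / (q * Real.log q)) * Real.arcsin (Real.sqrt s * q) := by
  obtain ⟨hq0, hq1⟩ := hq
  obtain ⟨hs0, hs1⟩ := hs
  have hsum := summable_zeta hq0 hq1 hs1
  refine ⟨hsum, ?_⟩
  have hlim := (tendsto_arcsin_sqrt_mul_rpow_natCast (s := s) hq0 hq1).const_mul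
    ((1 - q ^ 2) / (q * log q))
  rw [mul_zero] at hlim
  have hbound := ((antitoneOn_zeta hq0 hq1 hs0 hs1).mono (Ici_subset_Ioi.mpr neg_one_lt_zero))
    |>.sub_le_tsum_of_hasDerivAt hsum
      (fun x hx => hasDerivAt_arcsin_sqrt_mul_rpow hq0 hq1 hs0 hs1 (by linarith)) hlim
  simp only [zero_add, rpow_one] at hbound
  linarith
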